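/- Let D ⊂ ℝ^d be bounded, let K be a probability kernel on the closure of D with ∫K_x(dy)(y−x) = 0 and ∫K_x(dy)|y−x|² = s·∫K_x(dy) tr(w(y)) for all x, where w is a continuous nonnegative-definite-matrix-valued function and s > 0. If f is continuous on cl(D), f = 0 on the zero set {tr(w)=0}, then for every ε > 0 there exists m ≥ 0 with |f| < ε + m·tr(w) on cl(D); consequently sup_x |∫K_x(dy) f(y)| ≤ ε + (m/s)·sup_x ∫K_x(dy)|y−x|², which tends to ε as s → ∞. -/

import Mathlib

/-! On the compact part of `cl D` where `|f| ≥ ε`, the trace of `w` cannot vanish (since `f`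
vanishes where it does), so `|f| / tr w` is bounded there by some `m`; this gives
`|f| < ε + m · tr w` on all of `cl D`. Integrating against `K x` and using the second-moment
identity `∫ tr w dK_x = s⁻¹ ∫ ‖y - x‖² dK_x` yields the bound on `|∫ f dK_x|`. -/

open MeasureTheory

open Set in
theorem IsCompact.exists_norm_lt_add_mul {X E : Type*} [TopologicalSpace X] [T2Space X]
    [SeminormedAddGroup E] {S : Set X} (hS : IsCompact S) {f : X → E} {g : X → ℝ}
    (hf : ContinuousOn f S) (hg : ContinuousOn g S) (hg0 : ∀ y ∈ S, 0 ≤ g y)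
    (hfg : ∀ y ∈ S, g y = 0 → f y = 0) {ε : ℝ} (hε : 0 < ε) :
    ∃ m, 0 ≤ m ∧ ∀ y ∈ S, ‖f y‖ < ε + m * g y := by
  set T := S ∩ (fun y => ‖f y‖) ⁻¹' Ici ε
  have hT : IsCompact T :=
    hS.of_isClosed_subset (hf.norm.preimage_isClosed_of_isClosed hS.isClosed isClosed_Ici)
      inter_subset_left
  have hgT : ∀ y ∈ T, 0 < g y := fun y ⟨hyS, hy⟩ =>
    (hg0 y hyS).lt_of_ne' fun h => by
      simp only [mem_preimage, mem_Ici, hfg y hyS h, norm_zero] at hy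
      linarith
  obtain ⟨C, hC⟩ := hT.exists_bound_of_continuousOn <|
    (hf.norm.mono inter_subset_left).div (hg.mono inter_subset_left) fun y hy => (hgT y hy).ne'
  refine ⟨max C 0, le_max_right _ _, fun y hyS => ?_⟩
  have hmg : 0 ≤ max C 0 * g y := mul_nonneg (le_max_right _ _) (hg0 y hyS)
  by_cases hy : ε ≤ ‖f y‖
  · have hyT : y ∈ T := ⟨hyS, hy⟩
    have hratio : ‖f y‖ / g y ≤ C := (le_abs_self _).trans (hC y hyT)
    calc ‖f y‖ ≤ C * g y := (div_le_iff₀ (hgT y hyT)).1 hratio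
      _ ≤ max C 0 * g y := by gcongr; exacts [(hgT y hyT).le, le_max_left _ _]
      _ < ε + max C 0 * g y := lt_add_of_pos_left _ hε
  · linarith

theorem ContinuousOn.integrable_of_measure_compl_eq_zero {X E : Type*} [TopologicalSpace X]
    [T2Space X] [MeasurableSpace X] [OpensMeasurableSpace X] [NormedAddCommGroup E]
    {μ : Measure X} [IsFiniteMeasure μ] {S : Set X} {g : X → E} (hg : ContinuousOn g S)
    (hS : IsCompact S) (hμS : μ Sᶜ = 0) : Integrable g μ := by
  have hres : μ.restrict S = μ := Measure.restrict_eq_self_of_ae_mem (ae_iff.2 hμS)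
  simpa only [IntegrableOn, hres] using hg.integrableOn_compact (μ := μ) hS

theorem norm_integral_le_add_mul_integral {X E : Type*} [TopologicalSpace X] [T2Space X]
    [MeasurableSpace X] [OpensMeasurableSpace X] [NormedAddCommGroup E] [NormedSpace ℝ E]
    {μ : Measure X} [IsProbabilityMeasure μ] {S : Set X} (hS : IsCompact S) (hμS : μ Sᶜ = 0)
    {f : X → E} {g : X → ℝ} (hg : ContinuousOn g S) {ε m : ℝ}
    (hfg : ∀ y ∈ S, ‖f y‖ ≤ ε + m * g y) :
    ‖∫ y, f y ∂μ‖ ≤ ε + m * ∫ y, g y ∂μ := by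
  have hgint : Integrable g μ := hg.integrable_of_measure_compl_eq_zero hS hμS
  calc ‖∫ y, f y ∂μ‖ ≤ ∫ y, (ε + m * g y) ∂μ :=
        norm_integral_le_of_norm_le ((integrable_const ε).add (hgint.const_mul m)) <|
          (ae_iff.2 hμS).mono hfg
    _ = ε + m * ∫ y, g y ∂μ := by
        rw [integral_add (integrable_const ε) (hgint.const_mul m), integral_const,
          integral_const_mul, probReal_univ, one_smul]

theorem concentration_on_effective_boundary_general (d : ℕ)
    (D : Set (EuclideanSpace ℝ (Fin d))) (hD : Bornology.IsBounded D)
    (w : EuclideanSpace ℝ (Fin d) → Matrix (Fin d) (Fin d) ℝ)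
    (hw : Continuous w) (hwpos : ∀ y, (w y).PosSemidef)
    (K : EuclideanSpace ℝ (Fin d) → Measure (EuclideanSpace ℝ (Fin d)))
    (hK : ∀ x ∈ closure D, IsProbabilityMeasure (K x))
    (hKsupp : ∀ x ∈ closure D, K x (closure D)ᶜ = 0)
    (s : ℝ) (hs : 0 < s)
    (hmom2 : ∀ x ∈ closure D,
      (∫ y, ‖y - x‖ ^ 2 ∂(K x)) = s * ∫ y, (w y).trace ∂(K x))
    (f : EuclideanSpace ℝ (Fin d) → ℝ) (hf : ContinuousOn f (closure D))
    (hf0 : ∀ y ∈ closure D, (w y).trace = 0 → f y = 0) :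
    ∀ ε > 0, ∃ m : ℝ, 0 ≤ m ∧
      (∀ y ∈ closure D, |f y| < ε + m * (w y).trace) ∧
      ∀ x ∈ closure D,
        |∫ y, f y ∂(K x)| ≤ ε + (m / s) * ∫ y, ‖y - x‖ ^ 2 ∂(K x) := by
  intro ε hε
  have hS : IsCompact (closure D) := hD.isCompact_closure
  have htr : Continuous fun y => (w y).trace := hw.matrix_trace
  obtain ⟨m, hm, hfm⟩ := hS.exists_norm_lt_add_mul hf htr.continuousOn
    (fun y _ => (hwpos y).trace_nonneg) hf0 hε
  refine ⟨m, hm, hfm, fun x hx => ?_⟩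
  have := hK x hx
  calc |∫ y, f y ∂(K x)| ≤ ε + m * ∫ y, (w y).trace ∂(K x) :=
        norm_integral_le_add_mul_integral hS (hKsupp x hx) htr.continuousOn
          fun y hy => (hfm y hy).le
    _ = ε + (m / s) * ∫ y, ‖y - x‖ ^ 2 ∂(K x) := by
        rw [hmom2 x hx]
        field_simp

/-- Concentration on the effective boundary. Let `D ⊂ ℝ^d` be bounded, `w` a continuous
nonnegative definite matrix-valued function, and `K` a probability kernel on `cl D`
with vanishing first moments and second moments `∫‖y−x‖² dK_x = s·∫ tr(w(y)) dK_x`,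
`s > 0`. If `f` is continuous on `cl D` and vanishes on `{tr w = 0}`, then for every
`ε > 0` there is `m ≥ 0` with `|f| < ε + m·tr w` on `cl D`, and consequently
`|∫ f dK_x| ≤ ε + (m/s)·∫‖y−x‖² dK_x` for all `x ∈ cl D`. -/
theorem concentration_on_effective_boundary (d : ℕ)
    (D : Set (EuclideanSpace ℝ (Fin d))) (hD : Bornology.IsBounded D)
    (w : EuclideanSpace ℝ (Fin d) → Matrix (Fin d) (Fin d) ℝ)
    (hw : Continuous w) (hwpos : ∀ y, (w y).PosSemidef)
    (K : EuclideanSpace ℝ (Fin d) → Measure (EuclideanSpace ℝ (Fin d)))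
    (hK : ∀ x ∈ closure D, IsProbabilityMeasure (K x))
    (hKsupp : ∀ x ∈ closure D, K x (closure D)ᶜ = 0)
    (s : ℝ) (hs : 0 < s)
    (hmom1 : ∀ x ∈ closure D, (∫ y, (y - x) ∂(K x)) = 0)
    (hmom2 : ∀ x ∈ closure D,
      (∫ y, ‖y - x‖ ^ 2 ∂(K x)) = s * ∫ y, (w y).trace ∂(K x))
    (f : EuclideanSpace ℝ (Fin d) → ℝ) (hf : ContinuousOn f (closure D))
    (hf0 : ∀ y ∈ closure D, (w y).trace = 0 → f y = 0) :
    ∀ ε > 0, ∃ m : ℝ, 0 ≤ m ∧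
      (∀ y ∈ closure D, |f y| < ε + m * (w y).trace) ∧
      ∀ x ∈ closure D,
        |∫ y, f y ∂(K x)| ≤ ε + (m / s) * ∫ y, ‖y - x‖ ^ 2 ∂(K x) :=
  concentration_on_effective_boundary_general d D hD w hw hwpos K hK hKsupp s hs hmom2 f hf hf0
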